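/- Let d ≥ 1 and consider the single-qudit classical-verification ticket scheme with the computational basis {|t⟩} and its Fourier transform {F|t⟩} (F the quantum Fourier transform on ℂ^d): the key is (t,b) ∈ {0,…,d−1} × {0,1} chosen uniformly, the ticket state is |t⟩ if b = 0 and F|t⟩ if b = 1, the bank independently sends two uniform challenges c_1, c_2 ∈ {0,1}, and (a_1,a_2) is accepted if a_j = t whenever c_j = b. There exists a counterfeiting strategy, given for each challenge pair (c_1,c_2) by a POVM {A_{c_1 c_2}^{a_1 a_2}}_{a_1,a_2 ∈ {0,…,d−1}} on ℂ^d, whose success probability is exactly 3/4 + 1/(4√d). -/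

import Mathlib

open Matrix
open scoped ComplexOrder

/-- The quantum Fourier transform on `ℂ^d`, `⟨j|F|i⟩ = ω^{ij}/√d`, `ω = e^{2πi/d}`. -/
noncomputable def fourierMat (d : ℕ) : Matrix (Fin d) (Fin d) ℂ :=
  Matrix.of fun j i =>
    Complex.exp (2 * Real.pi * Complex.I / d) ^ ((j : ℕ) * (i : ℕ)) / Real.sqrt d

/-- The ticket state for key `(t,b)`: the computational basis vector `|t⟩` if `b = 0`,
and its Fourier transform `F|t⟩` if `b = 1`. -/
noncomputable def fticket (d : ℕ) (b : Fin 2) (t : Fin d) : Fin d → ℂ :=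
  if b = 0 then (fun j => if j = t then 1 else 0) else (fun j => fourierMat d j t)

/-! The computational basis `e_t` and the Fourier basis `F e_t` are mutually unbiased,
`|⟨e_a, F e_b⟩|² = 1/d`. If both challenges ask for the same basis, the counterfeiter measures
in that basis and reports the outcome twice: this passes with certainty whether or not it is the
basis of the ticket. If the challenges ask for different bases, it measures the rank-one POVM
built from `v_{ab} = e_a + √d ⟨F e_b, e_a⟩ F e_b`. Completeness of both bases and unbiasedness
give `∑ |v_{ab}⟩⟨v_{ab}| = (2d + 2√d) I`, while
`|⟨v_{ab}, e_a⟩|² = |⟨v_{ab}, F e_b⟩|² = (1 + √d)²/d`, so the answer in the basis of the ticket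
is right with probability `(1 + 1/√d)/2`. Averaging over the four challenge pairs gives `3/4 + 1/(4√d)`. -/

open Complex ComplexConjugate

lemma sum_vecMulVec {α ι m n : Type*} [NonUnitalNonAssocSemiring α] (s : Finset ι)
    (x : ι → m → α) (v : n → α) :
    ∑ i ∈ s, vecMulVec (x i) v = vecMulVec (∑ i ∈ s, x i) v := by
  ext j k
  simp [vecMulVec_apply, Finset.sum_mul, Matrix.sum_apply]

lemma vecMulVec_add_smul_star {n : Type*} (u w : n → ℂ) (c : ℂ) :
    vecMulVec (u + c • w) (star (u + c • w)) =
      vecMulVec u (star u) + (c * star c) • vecMulVec w (star w) +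
        (c • vecMulVec w (star u) + (c • vecMulVec w (star u))ᴴ) := by
  simp only [star_add, star_smul, add_vecMulVec, vecMulVec_add, smul_vecMulVec, vecMulVec_smul,
    conjTranspose_smul, conjTranspose_vecMulVec, star_star, smul_add, smul_smul, mul_comm c]
  abel

section UnbiasedBases

variable {n : Type*} [Fintype n]

lemma dotProduct_vecMulVec_mulVec (ψ v : n → ℂ) :
    star ψ ⬝ᵥ vecMulVec v (star v) *ᵥ ψ = normSq (star v ⬝ᵥ ψ) := by
  rw [vecMulVec_mulVec, op_smul_eq_smul, dotProduct_smul, smul_eq_mul, star_dotProduct ψ v,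
    normSq_eq_conj_mul_self, RCLike.star_def, mul_comm]

lemma re_dotProduct_smul_vecMulVec_mulVec (ψ v : n → ℂ) (r : ℝ) :
    (star ψ ⬝ᵥ (r • vecMulVec v (star v)) *ᵥ ψ).re = r * normSq (star v ⬝ᵥ ψ) := by
  rw [smul_mulVec, dotProduct_smul, dotProduct_vecMulVec_mulVec]
  simp

lemma sum_sum_re_dotProduct_mulVec_of_sum_eq_one [DecidableEq n] {ι κ : Type*} [Fintype ι]
    [Fintype κ] {A : ι → κ → Matrix n n ℂ} (hA : ∑ i, ∑ j, A i j = 1) (ψ : n → ℂ) :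
    ∑ i, ∑ j, (star ψ ⬝ᵥ A i j *ᵥ ψ).re = (star ψ ⬝ᵥ ψ).re := by
  simp only [← re_sum, ← dotProduct_sum, ← sum_mulVec, hA, one_mulVec]

lemma sum_dotProduct_smul_eq_self [DecidableEq n] {w : n → n → ℂ}
    (hw : ∑ b, vecMulVec (w b) (star (w b)) = 1) (u : n → ℂ) :
    ∑ b, (star (w b) ⬝ᵥ u) • w b = u := by
  simpa [sum_mulVec, vecMulVec_mulVec] using congrArg (· *ᵥ u) hw

lemma dotProduct_star_self_eq_one_of_unbiased [DecidableEq n] [Nonempty n] {w : n → n → ℂ}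
    (hw : ∑ b, vecMulVec (w b) (star (w b)) = 1) {u : n → ℂ}
    (huw : ∀ b, normSq (star (w b) ⬝ᵥ u) = (Fintype.card n : ℝ)⁻¹) :
    star u ⬝ᵥ u = 1 := by
  calc star u ⬝ᵥ u = star u ⬝ᵥ (∑ b, vecMulVec (w b) (star (w b))) *ᵥ u := by
        rw [hw, one_mulVec]
    _ = ∑ b, (normSq (star (w b) ⬝ᵥ u) : ℂ) := by
        simp only [sum_mulVec, dotProduct_sum, dotProduct_vecMulVec_mulVec]
    _ = 1 := by simp [huw]

/-- The phase of `w` makes its overlap with `u` real and positive; when `u`, `w` are unbiased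
unit vectors (`|⟨w, u⟩|² = 1/n`), `alignedSum u w` is then equally close to `u` and to `w`. -/
noncomputable def alignedSum (u w : n → ℂ) : n → ℂ :=
  u + ((Real.sqrt (Fintype.card n) : ℂ) * (star w ⬝ᵥ u)) • w

lemma sum_vecMulVec_alignedSum [DecidableEq n] [Nonempty n] {u w : n → n → ℂ}
    (hu : ∑ a, vecMulVec (u a) (star (u a)) = 1) (hw : ∑ b, vecMulVec (w b) (star (w b)) = 1)
    (huw : ∀ a b, normSq (star (w b) ⬝ᵥ u a) = (Fintype.card n : ℝ)⁻¹) :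
    ∑ a, ∑ b, vecMulVec (alignedSum (u a) (w b)) (star (alignedSum (u a) (w b))) =
      (2 * Fintype.card n + 2 * Real.sqrt (Fintype.card n) : ℝ) • 1 := by
  set s := Real.sqrt (Fintype.card n)
  have hs : s ^ 2 = Fintype.card n := Real.sq_sqrt (Nat.cast_nonneg _)
  set c : n → n → ℂ := fun a b => (s : ℂ) * (star (w b) ⬝ᵥ u a)
  have hc : ∀ a b, c a b * star (c a b) = 1 := fun a b => by
    have hcard : (Fintype.card n : ℝ) ≠ 0 := by positivity
    rw [RCLike.star_def, mul_conj, normSq_mul, normSq_ofReal, huw, ← sq, hs,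
      mul_inv_cancel₀ hcard, ofReal_one]
  have cross : ∑ a, ∑ b, c a b • vecMulVec (w b) (star (u a)) = (s : ℂ) • 1 := by
    calc ∑ a, ∑ b, c a b • vecMulVec (w b) (star (u a))
        = ∑ a, vecMulVec (∑ b, c a b • w b) (star (u a)) := by
          simp only [← smul_vecMulVec, sum_vecMulVec]
      _ = ∑ a, vecMulVec ((s : ℂ) • u a) (star (u a)) := by
          simp only [c, mul_smul, ← Finset.smul_sum, sum_dotProduct_smul_eq_self hw]
      _ = (s : ℂ) • 1 := by
          simp only [smul_vecMulVec, ← Finset.smul_sum, hu]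
  have hv : ∀ a b, alignedSum (u a) (w b) = u a + c a b • w b := fun _ _ => rfl
  simp only [hv, vecMulVec_add_smul_star, hc, one_smul, Finset.sum_add_distrib,
    ← conjTranspose_sum]
  rw [cross]
  simp only [hw, Finset.sum_const, Finset.card_univ, ← Finset.smul_sum, hu, conjTranspose_smul,
    conjTranspose_one]
  ext i j
  by_cases hij : i = j <;> simp [hij, Matrix.natCast_apply]
  ring

variable {u w : n → ℂ}

lemma normSq_alignedSum_dotProduct_left [Nonempty n] (hu : star u ⬝ᵥ u = 1)
    (huw : normSq (star w ⬝ᵥ u) = (Fintype.card n : ℝ)⁻¹) :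
    normSq (star (alignedSum u w) ⬝ᵥ u) =
      (1 + Real.sqrt (Fintype.card n)) ^ 2 / Fintype.card n := by
  have hs : Real.sqrt (Fintype.card n) ^ 2 = Fintype.card n := Real.sq_sqrt (Nat.cast_nonneg _)
  have hs0 : Real.sqrt (Fintype.card n) ≠ 0 := by positivity
  have h : star (alignedSum u w) ⬝ᵥ u = ((1 + (Real.sqrt (Fintype.card n))⁻¹ : ℝ) : ℂ) := by
    rw [alignedSum, star_add, star_smul, add_dotProduct, smul_dotProduct, hu, smul_eq_mul,
      star_mul', mul_assoc, RCLike.star_def, ← normSq_eq_conj_mul_self, huw, conj_ofReal]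
    norm_cast
    rw [← div_eq_mul_inv, Real.sqrt_div_self', one_div]
  rw [h, normSq_ofReal]
  field_simp
  rw [hs]
  ring

lemma normSq_alignedSum_dotProduct_right (hw : star w ⬝ᵥ w = 1)
    (huw : normSq (star w ⬝ᵥ u) = (Fintype.card n : ℝ)⁻¹) :
    normSq (star (alignedSum u w) ⬝ᵥ w) =
      (1 + Real.sqrt (Fintype.card n)) ^ 2 / Fintype.card n := by
  have h : star (alignedSum u w) ⬝ᵥ w = (1 + Real.sqrt (Fintype.card n)) * star (star w ⬝ᵥ u) := by
    rw [alignedSum, star_add, star_smul, add_dotProduct, smul_dotProduct, hw, smul_eq_mul,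
      star_mul', ← star_dotProduct]
    simp
    ring
  rw [h, normSq_mul, RCLike.star_def, normSq_conj, huw, ← ofReal_one, ← ofReal_add,
    normSq_ofReal]
  ring

end UnbiasedBases

lemma IsPrimitiveRoot.sum_pow_mul_conj_pow {ζ : ℂ} {d : ℕ} (hζ : IsPrimitiveRoot ζ d)
    (j k : Fin d) :
    ∑ a : Fin d, ζ ^ ((j : ℕ) * a) * conj (ζ ^ ((k : ℕ) * a)) = if j = k then (d : ℂ) else 0 := by
  have hd : d ≠ 0 := (Fin.pos j).ne'
  have hζ0 : ζ ≠ 0 := hζ.ne_zero hd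
  set z := ζ ^ (j : ℕ) * (ζ ^ (k : ℕ))⁻¹
  have hterm : ∀ a : ℕ, ζ ^ ((j : ℕ) * a) * conj (ζ ^ ((k : ℕ) * a)) = z ^ a := fun a => by
    rw [← Complex.inv_eq_conj (by rw [norm_pow, hζ.norm'_eq_one hd, one_pow]), mul_pow, inv_pow,
      pow_mul, pow_mul]
  simp only [hterm]
  split_ifs with hjk
  · simp [z, hjk, hζ0]
  · have hz1 : z ≠ 1 := fun h => hjk (Fin.ext (hζ.pow_inj j.2 k.2
      (by rw [← mul_inv_eq_one₀ (pow_ne_zero _ hζ0)]; exact h)))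
    have hzd : z ^ d = 1 := by
      rw [mul_pow, inv_pow, ← pow_mul, ← pow_mul, mul_comm _ d, mul_comm _ d, pow_mul, pow_mul,
        hζ.pow_eq_one, one_pow, one_pow, inv_one, mul_one]
    rw [Fin.sum_univ_eq_sum_range (z ^ ·), geom_sum_eq hz1, hzd, sub_self, zero_div]

section FourierTicket

variable {d : ℕ} [NeZero d]

lemma fourierMat_mul_conjTranspose : fourierMat d * (fourierMat d)ᴴ = 1 := by
  have hζ := isPrimitiveRoot_exp d (NeZero.ne d)
  have hs : ((Real.sqrt d : ℂ)) * Real.sqrt d = d := by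
    rw [← ofReal_mul, Real.mul_self_sqrt (Nat.cast_nonneg d), ofReal_natCast]
  ext j k
  simp only [mul_apply, conjTranspose_apply, fourierMat, of_apply, RCLike.star_def, map_div₀,
    conj_ofReal, div_mul_div_comm, hs, ← Finset.sum_div, hζ.sum_pow_mul_conj_pow, one_apply]
  split_ifs <;> simp [NeZero.ne d]

lemma sum_vecMulVec_fticket (b : Fin 2) :
    ∑ t, vecMulVec (fticket d b t) (star (fticket d b t)) = 1 := by
  fin_cases b
  · ext j k
    simp [fticket, vecMulVec_apply, Matrix.sum_apply, one_apply]
  · ext j k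
    simp [fticket, vecMulVec_apply, Matrix.sum_apply, ← fourierMat_mul_conjTranspose, mul_apply]

lemma normSq_fourierMat (j i : Fin d) : normSq (fourierMat d j i) = (d : ℝ)⁻¹ := by
  have hζ := isPrimitiveRoot_exp d (NeZero.ne d)
  rw [fourierMat, of_apply, normSq_div, normSq_ofReal, Real.mul_self_sqrt (Nat.cast_nonneg d),
    normSq_eq_norm_sq, norm_pow, hζ.norm'_eq_one (NeZero.ne d)]
  simp

lemma normSq_dotProduct_fticket {b b' : Fin 2} (h : b ≠ b') (t t' : Fin d) :
    normSq (star (fticket d b' t') ⬝ᵥ fticket d b t) = (d : ℝ)⁻¹ := by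
  fin_cases b <;> fin_cases b' <;> simp at h
  · simp [fticket, dotProduct, normSq_fourierMat]
  · simp [fticket, dotProduct, normSq_fourierMat]

lemma dotProduct_star_self_fticket (b : Fin 2) (t : Fin d) :
    star (fticket d b t) ⬝ᵥ fticket d b t = 1 :=
  dotProduct_star_self_eq_one_of_unbiased (sum_vecMulVec_fticket (b + 1)) fun t' => by
    simpa using normSq_dotProduct_fticket (by fin_cases b <;> decide) t t'

end FourierTicket

noncomputable def fourierAttack (d : ℕ) (c₁ c₂ : Fin 2) (a₁ a₂ : Fin d) :
    Matrix (Fin d) (Fin d) ℂ :=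
  if c₁ = c₂ then
    if a₁ = a₂ then vecMulVec (fticket d c₁ a₁) (star (fticket d c₁ a₁)) else 0
  else
    (2 * d + 2 * Real.sqrt d : ℝ)⁻¹ •
      vecMulVec (alignedSum (fticket d c₁ a₁) (fticket d c₂ a₂))
        (star (alignedSum (fticket d c₁ a₁) (fticket d c₂ a₂)))

section FourierAttack

variable {d : ℕ}

lemma fourierAttack_posSemidef (c₁ c₂ : Fin 2) (a₁ a₂ : Fin d) :
    (fourierAttack d c₁ c₂ a₁ a₂).PosSemidef := by
  unfold fourierAttack
  split_ifs
  · exact posSemidef_vecMulVec_self_star _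
  · exact .zero
  · exact (posSemidef_vecMulVec_self_star _).smul (by positivity)

variable [NeZero d]

lemma fourierAttack_sum_eq_one (c₁ c₂ : Fin 2) : ∑ a₁, ∑ a₂, fourierAttack d c₁ c₂ a₁ a₂ = 1 := by
  unfold fourierAttack
  split_ifs with hc
  · simp [Finset.sum_ite_eq, sum_vecMulVec_fticket]
  · have h := sum_vecMulVec_alignedSum (sum_vecMulVec_fticket c₁) (sum_vecMulVec_fticket c₂)
      fun a b => by simpa using normSq_dotProduct_fticket (d := d) hc a b
    have hpos : (0 : ℝ) < 2 * d + 2 * Real.sqrt d := by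
      have : (0 : ℝ) < d := by exact_mod_cast NeZero.pos d
      positivity
    simp only [Fintype.card_fin] at h
    simp only [← Finset.smul_sum, h, smul_smul, inv_mul_cancel₀ hpos.ne', one_smul]

lemma fourierAttack_sum_accepted (b c₁ c₂ : Fin 2) (t : Fin d) :
    ∑ a₁, ∑ a₂, (if (c₁ = b → a₁ = t) ∧ (c₂ = b → a₂ = t)
        then (star (fticket d b t) ⬝ᵥ fourierAttack d c₁ c₂ a₁ a₂ *ᵥ fticket d b t).re else 0) =
      if c₁ = c₂ then 1 else (1 + Real.sqrt d) ^ 2 / (2 * d + 2 * Real.sqrt d) := by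
  set ψ := fticket d b t
  have hψ : star ψ ⬝ᵥ ψ = 1 := dotProduct_star_self_fticket b t
  have hd : (d : ℝ) ≠ 0 := NeZero.ne _
  have mixed : ∀ v : Fin d → Fin d → ℂ,
      (∀ a, normSq (star (v a) ⬝ᵥ ψ) = (1 + Real.sqrt d) ^ 2 / d) →
      ∑ a, (star ψ ⬝ᵥ ((2 * d + 2 * Real.sqrt d : ℝ)⁻¹ • vecMulVec (v a) (star (v a))) *ᵥ ψ).re =
        (1 + Real.sqrt d) ^ 2 / (2 * d + 2 * Real.sqrt d) := fun v hv => by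
    simp only [re_dotProduct_smul_vecMulVec_mulVec, hv, Finset.sum_const, Finset.card_univ,
      Fintype.card_fin, nsmul_eq_mul]
    field_simp
  by_cases h₁ : c₁ = b <;> by_cases h₂ : c₂ = b
  · subst h₁ h₂
    simp only [fourierAttack, true_implies, ite_and, Finset.sum_ite_irrel, Finset.sum_const_zero,
      Finset.sum_ite_eq', Finset.mem_univ, if_true]
    rw [dotProduct_vecMulVec_mulVec, hψ, normSq_one, ofReal_one, one_re]
  · subst h₁
    simp only [fourierAttack, true_implies, h₂, Ne.symm h₂, false_implies, and_true,
      Finset.sum_ite_irrel, Finset.sum_const_zero, Finset.sum_ite_eq', Finset.mem_univ, if_true,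
      if_false]
    exact mixed _ fun a => by
      simpa using normSq_alignedSum_dotProduct_left hψ
        (by simpa using normSq_dotProduct_fticket (Ne.symm h₂) t a)
  · subst h₂
    simp only [fourierAttack, true_implies, h₁, false_implies, true_and, Finset.sum_ite_eq',
      Finset.mem_univ, if_true, if_false]
    exact mixed _ fun a => by
      simpa using normSq_alignedSum_dotProduct_right hψ
        (by simpa using normSq_dotProduct_fticket h₁ a t)
  · have hc : c₁ = c₂ := by omega
    simp only [h₂, false_imp_iff, and_self, if_true, hc]
    rw [sum_sum_re_dotProduct_mulVec_of_sum_eq_one (fourierAttack_sum_eq_one c₂ c₂), hψ, one_re]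

end FourierAttack

/-- For the single-qudit classical-verification ticket scheme built from the
computational basis and its Fourier transform (key `(t,b)` uniform, ticket
`fticket d b t`, two independent uniform challenges `c₁,c₂ ∈ {0,1}`, answers
`(a₁,a₂)` accepted iff `a_j = t` whenever `c_j = b`), there is a counterfeiting
strategy, given by POVMs `{A_{c₁c₂}^{a₁a₂}}` on `ℂ^d`, whose success probability is
exactly `3/4 + 1/(4√d)`. -/
theorem fourier_scheme_attack (d : ℕ) (hd : 1 ≤ d) :
    ∃ A : Fin 2 → Fin 2 → Fin d → Fin d → Matrix (Fin d) (Fin d) ℂ,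
      (∀ c₁ c₂ a₁ a₂, (A c₁ c₂ a₁ a₂).PosSemidef) ∧
      (∀ c₁ c₂, ∑ a₁, ∑ a₂, A c₁ c₂ a₁ a₂ = 1) ∧
      (1 / (2 * d) : ℝ) * ∑ b : Fin 2, ∑ t : Fin d,
          (1 / 4 : ℝ) * ∑ c₁ : Fin 2, ∑ c₂ : Fin 2, ∑ a₁ : Fin d, ∑ a₂ : Fin d,
            (if (c₁ = b → a₁ = t) ∧ (c₂ = b → a₂ = t)
              then (star (fticket d b t) ⬝ᵥ
                (A c₁ c₂ a₁ a₂).mulVec (fticket d b t)).re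
              else 0)
        = 3 / 4 + 1 / (4 * Real.sqrt d) := by
  have : NeZero d := ⟨by omega⟩
  refine ⟨fourierAttack d, fourierAttack_posSemidef, fourierAttack_sum_eq_one, ?_⟩
  have hs : Real.sqrt d ^ 2 = d := Real.sq_sqrt (Nat.cast_nonneg d)
  have hs0 : 0 < Real.sqrt d := Real.sqrt_pos.mpr (by exact_mod_cast hd)
  simp only [fourierAttack_sum_accepted, Fin.sum_univ_two, Fin.isValue, if_true,
    zero_ne_one, one_ne_zero, if_false, Finset.sum_const, Finset.card_univ, Fintype.card_fin,
    nsmul_eq_mul]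
  field_simp
  push_cast
  linear_combination (4 * Real.sqrt d + 4) * hs
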